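/- Let U ⊆ ℝ⁴ be open with coordinates (s₁,s₂,s₃,s₄), let Z : U → ℝ be a C¹ function with ∂Z/∂s₄ = 0 on U satisfying at every point of U the cubic equation Z³ − Z·(s₁²/48 + s₁s₂/80 + 3s₂²/1600) − s₁³/96 + (13/2880)s₁²s₂ − (1/28800)s₁s₂² − (41/288000)s₂³ − (3/2)s₃ = 0, and assume 3Z(s)² − (s₁²/48 + s₁s₂/80 + 3s₂²/1600) ≠ 0 at every point s ∈ U. Let F : U → ℝ be the potential defined from Z by the explicit formula given in the context. Then F satisfies the quasihomogeneity (Euler) identity (1/3)s₁·∂F/∂s₁ + (1/3)s₂·∂F/∂s₂ + s₃·∂F/∂s₃ + s₄·∂F/∂s₄ = (7/3)·F at every point of U; in particular Z itself satisfies (1/3)s₁·∂Z/∂s₁ + (1/3)s₂·∂Z/∂s₂ + s₃·∂Z/∂s₃ = (1/3)·Z. -/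

import Mathlib

/-- The partial derivative of `f : ℝ⁴ → ℝ` in the `i`-th coordinate direction. -/
noncomputable def pd (i : Fin 4) (f : (Fin 4 → ℝ) → ℝ) : (Fin 4 → ℝ) → ℝ :=
  fun p => deriv (fun t : ℝ => f (Function.update p i t)) (p i)

/-- The cubic equation satisfied by `Z` (as a function of `(s₁, s₂, s₃)`). -/
noncomputable def cubicF4 (s : Fin 4 → ℝ) (z : ℝ) : ℝ :=
  z ^ 3 - z * ((s 0) ^ 2 / 48 + (s 0) * (s 1) / 80 + 3 * (s 1) ^ 2 / 1600) -
    (s 0) ^ 3 / 96 + (13 / 2880) * (s 0) ^ 2 * (s 1) - (1 / 28800) * (s 0) * (s 1) ^ 2 -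
    (41 / 288000) * (s 1) ^ 3 - (3 / 2) * (s 2)

/-- The potential of the algebraic Frobenius manifold obtained from the distinguished
nilpotent orbit `F₄(a₂)` of the Lie algebra `F₄`, written in the flat coordinates
`(s₁, s₂, s₃, s₄) = (s 0, s 1, s 2, s 3)`, where `Z` solves the cubic `cubicF4 s (Z s) = 0`. -/
noncomputable def potF4 (Z : (Fin 4 → ℝ) → ℝ) (s : Fin 4 → ℝ) : ℝ :=
  (9 / 44800) * (Z s) ^ 2 * (s 0) ^ 5 + (3 / 89600) * (Z s) ^ 2 * (s 0) ^ 4 * (s 1) -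
    (3 / 89600) * (Z s) ^ 2 * (s 0) ^ 3 * (s 1) ^ 2 -
    (3 / 640000) * (Z s) ^ 2 * (s 0) ^ 2 * (s 1) ^ 3 +
    (153 / 89600000) * (Z s) ^ 2 * (s 0) * (s 1) ^ 4 +
    (1107 / 4480000000) * (Z s) ^ 2 * (s 1) ^ 5 +
    (81 / 2800) * (Z s) ^ 2 * (s 0) ^ 2 * (s 2) +
    (243 / 14000) * (Z s) ^ 2 * (s 0) * (s 1) * (s 2) +
    (729 / 280000) * (Z s) ^ 2 * (s 1) ^ 2 * (s 2) +
    (409 / 2419200) * (Z s) * (s 0) ^ 6 - (191 / 1344000) * (Z s) * (s 0) ^ 5 * (s 1) +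
    (187 / 5376000) * (Z s) * (s 0) ^ 4 * (s 1) ^ 2 +
    (67 / 13440000) * (Z s) * (s 0) ^ 3 * (s 1) ^ 3 -
    (319 / 179200000) * (Z s) * (s 0) ^ 2 * (s 1) ^ 4 +
    (529 / 13440000000) * (Z s) * (s 0) * (s 1) ^ 5 +
    (1247 / 38400000000) * (Z s) * (s 1) ^ 6 +
    (27 / 560) * (Z s) * (s 0) ^ 3 * (s 2) -
    (117 / 5600) * (Z s) * (s 0) ^ 2 * (s 1) * (s 2) +
    (9 / 56000) * (Z s) * (s 0) * (s 1) ^ 2 * (s 2) +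
    (369 / 560000) * (Z s) * (s 1) ^ 3 * (s 2) + (243 / 70) * (Z s) * (s 2) ^ 2 -
    (29459 / 580608000) * (s 0) ^ 6 * (s 1) + (6089 / 276480000) * (s 0) ^ 5 * (s 1) ^ 2 -
    (254609 / 34836480000) * (s 0) ^ 4 * (s 1) ^ 3 +
    (152263 / 116121600000) * (s 0) ^ 3 * (s 1) ^ 4 -
    (300457 / 5806080000000) * (s 0) ^ 2 * (s 1) ^ 5 -
    (1973651 / 174182400000000) * (s 0) * (s 1) ^ 6 +
    (292289 / 193536000000000) * (s 1) ^ 7 +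
    (17 / 44800) * (s 0) ^ 4 * (s 2) - (2647 / 336000) * (s 0) ^ 3 * (s 1) * (s 2) +
    (6059 / 2240000) * (s 0) ^ 2 * (s 1) ^ 2 * (s 2) -
    (18223 / 33600000) * (s 0) * (s 1) ^ 3 * (s 2) +
    (11443 / 174182400) * (s 0) ^ 7 + (60131 / 1344000000) * (s 1) ^ 4 * (s 2) +
    (1 / 20) * (s 0) * (s 2) ^ 2 + (3 / 200) * (s 1) * (s 2) ^ 2 -
    2 * (s 0) * (s 2) * (s 3) + (3 / 5) * (s 1) * (s 2) * (s 3) + 2 * (s 0) * (s 3) ^ 2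

/-- The flat metric `η` of the `F₄(a₂)` algebraic Frobenius manifold:
`η₁₃ = η₃₁ = −2`, `η₂₃ = η₃₂ = 3/5`, `η₁₄ = η₄₁ = 4`, all other entries `0`. -/
noncomputable def etaF4 : Matrix (Fin 4) (Fin 4) ℝ :=
  !![0, 0, -2, 4; 0, 0, 3 / 5, 0; -2, 3 / 5, 0, 0; 4, 0, 0, 0]

/-! Give `s` the integer weights `(1, 1, 3, 3)` and `z` the weight `1` (three times the paper's
degrees). Then the cubic is quasihomogeneous of degree 3 and the potential, read as a polynomial
`P(s, z)`, of degree 7; differentiating these scaling identities at `t = 1` gives their Euler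
identities. Differentiating the cubic along the graph of its simple root `Z` forces `Z` to have
Euler degree 1, and the chain rule then carries the Euler identity of `P` over to
`F(s) = P(s, Z(s))`. -/

open Filter Topology

section Euler

variable {E : Type*} [NormedAddCommGroup E] [NormedSpace ℝ E]

theorem HasFDerivAt.apply_eq_of_comp_eq_pow_mul {G : E → ℝ} {G' : E →L[ℝ] ℝ} {x v : E}
    {c : ℝ → E} {k : ℕ} (hG : HasFDerivAt G G' x) (hc : HasDerivAt c v 1) (hc1 : c 1 = x)
    (hscale : ∀ t, G (c t) = t ^ k * G x) : G' v = k * G x := by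
  have hchain : HasDerivAt (G ∘ c) (G' v) 1 := by
    rw [← hc1] at hG
    exact hG.comp_hasDerivAt 1 hc
  have hpow : HasDerivAt (G ∘ c) (k * G x) 1 := by
    have := (hasDerivAt_pow k (1 : ℝ)).mul_const (G x)
    rw [one_pow, mul_one] at this
    exact this.congr_of_eventuallyEq (Eventually.of_forall hscale)
  exact hchain.unique hpow

theorem HasFDerivAt.comp_graph {G : E × ℝ → ℝ} {G' : E × ℝ →L[ℝ] ℝ} {Z : E → ℝ}
    {Z' : E →L[ℝ] ℝ} {p : E} (hG : HasFDerivAt G G' (p, Z p)) (hZ : HasFDerivAt Z Z' p) :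
    HasFDerivAt (fun s => G (s, Z s)) (G'.comp ((ContinuousLinearMap.id ℝ E).prod Z')) p :=
  hG.comp p ((hasFDerivAt_id p).prodMk hZ)

/-- Implicit differentiation: along the graph of a root `Z` of `C`, `C'(v, Z' v) = 0`, and at a
simple root `C'(v, ·)` is injective. -/
theorem HasFDerivAt.implicit_apply_eq {C : E × ℝ → ℝ} {C' : E × ℝ →L[ℝ] ℝ}
    {Z : E → ℝ} {Z' : E →L[ℝ] ℝ} {p v : E} {a : ℝ} (hC : HasFDerivAt C C' (p, Z p))
    (hZ : HasFDerivAt Z Z' p) (hroot : ∀ᶠ s in 𝓝 p, C (s, Z s) = 0)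
    (hsimple : C' (0, 1) ≠ 0) (hv : C' (v, a) = 0) : Z' v = a := by
  have hzero : HasFDerivAt (fun s => C (s, Z s)) (0 : E →L[ℝ] ℝ) p :=
    (hasFDerivAt_const 0 p).congr_of_eventuallyEq hroot
  have hgraph : C' (v, Z' v) = 0 := by
    simpa using congrArg (fun L => L v) ((hC.comp_graph hZ).unique hzero)
  have hsplit : ((v, Z' v) : E × ℝ) = (v, a) + (Z' v - a) • ((0, 1) : E × ℝ) := by
    ext <;> simp
  rw [hsplit, map_add, map_smul, hv, zero_add, smul_eq_mul] at hgraph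
  exact sub_eq_zero.mp ((mul_eq_zero.mp hgraph).resolve_right hsimple)

end Euler

def weightF4 : Fin 4 → ℕ := ![1, 1, 3, 3]

def scaleF4 (t : ℝ) (s : Fin 4 → ℝ) : Fin 4 → ℝ := fun i => t ^ weightF4 i * s i

def eulerF4 (s : Fin 4 → ℝ) : Fin 4 → ℝ := fun i => weightF4 i * s i

theorem hasDerivAt_scaleF4 (s : Fin 4 → ℝ) : HasDerivAt (scaleF4 · s) (eulerF4 s) 1 := by
  refine hasDerivAt_pi.mpr fun i => ?_
  simpa [eulerF4, scaleF4] using (hasDerivAt_pow (weightF4 i) (1 : ℝ)).mul_const (s i)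

theorem scaleF4_one (s : Fin 4 → ℝ) : scaleF4 1 s = s := by
  ext i
  simp [scaleF4]

theorem hasDerivAt_scaleF4_prod (s : Fin 4 → ℝ) (z : ℝ) :
    HasDerivAt (fun t => (scaleF4 t s, t * z)) (eulerF4 s, z) 1 := by
  simpa using (hasDerivAt_scaleF4 s).prodMk ((hasDerivAt_id' (1 : ℝ)).mul_const z)

theorem HasFDerivAt.pd_eq {f : (Fin 4 → ℝ) → ℝ} {f' : (Fin 4 → ℝ) →L[ℝ] ℝ}
    {p : Fin 4 → ℝ} (hf : HasFDerivAt f f' p) (i : Fin 4) : pd i f p = f' (Pi.single i 1) := by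
  rw [← Function.update_eq_self i p] at hf
  exact (hf.comp_hasDerivAt (p i) (hasDerivAt_update p i (p i))).deriv

theorem HasFDerivAt.sum_mul_pd_eq {f : (Fin 4 → ℝ) → ℝ} {f' : (Fin 4 → ℝ) →L[ℝ] ℝ}
    {p : Fin 4 → ℝ} (hf : HasFDerivAt f f' p) (v : Fin 4 → ℝ) :
    ∑ i, v i * pd i f p = f' v := by
  conv_rhs => rw [pi_eq_sum_univ' v]
  simp [hf.pd_eq]

theorem HasFDerivAt.euler_pd_eq {f : (Fin 4 → ℝ) → ℝ} {f' : (Fin 4 → ℝ) →L[ℝ] ℝ}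
    {p : Fin 4 → ℝ} (hf : HasFDerivAt f f' p) :
    p 0 * pd 0 f p + p 1 * pd 1 f p + 3 * p 2 * pd 2 f p + 3 * p 3 * pd 3 f p =
      f' (eulerF4 p) := by
  rw [← hf.sum_mul_pd_eq]
  simp [Fin.sum_univ_four, eulerF4, weightF4]

theorem cubicF4_scaleF4 (t z : ℝ) (s : Fin 4 → ℝ) :
    cubicF4 (scaleF4 t s) (t * z) = t ^ 3 * cubicF4 s z := by
  simp [cubicF4, scaleF4, weightF4]
  ring

theorem potF4_scaleF4 (t z : ℝ) (s : Fin 4 → ℝ) :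
    potF4 (fun _ => t * z) (scaleF4 t s) = t ^ 7 * potF4 (fun _ => z) s := by
  simp [potF4, scaleF4, weightF4]
  ring

theorem hasDerivAt_cubicF4 (s : Fin 4 → ℝ) (z : ℝ) :
    HasDerivAt (cubicF4 s)
      (3 * z ^ 2 - (s 0 ^ 2 / 48 + s 0 * s 1 / 80 + 3 * s 1 ^ 2 / 1600)) z := by
  set q := s 0 ^ 2 / 48 + s 0 * s 1 / 80 + 3 * s 1 ^ 2 / 1600
  have hcubic : cubicF4 s = fun w => w ^ 3 - w * q - (s 0 ^ 3 / 96 - 13 / 2880 * s 0 ^ 2 * s 1 +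
      1 / 28800 * s 0 * s 1 ^ 2 + 41 / 288000 * s 1 ^ 3 + 3 / 2 * s 2) := by
    funext w
    simp only [cubicF4, q]
    ring
  rw [hcubic]
  exact (((hasDerivAt_pow 3 z).sub ((hasDerivAt_id' z).mul_const q)).sub_const _).congr_deriv
    (by norm_num)

theorem differentiable_cubicF4 :
    Differentiable ℝ (fun x : (Fin 4 → ℝ) × ℝ => cubicF4 x.1 x.2) := by
  unfold cubicF4; fun_prop

theorem differentiable_potF4 :
    Differentiable ℝ (fun x : (Fin 4 → ℝ) × ℝ => potF4 (fun _ => x.2) x.1) := by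
  unfold potF4; fun_prop

section Point

variable {Z : (Fin 4 → ℝ) → ℝ} {Z' : (Fin 4 → ℝ) →L[ℝ] ℝ} {p : Fin 4 → ℝ}

theorem HasFDerivAt.apply_eulerF4_of_cubicF4 (hZ : HasFDerivAt Z Z' p)
    (hroot : ∀ᶠ s in 𝓝 p, cubicF4 s (Z s) = 0)
    (hsimple : 3 * Z p ^ 2 - (p 0 ^ 2 / 48 + p 0 * p 1 / 80 + 3 * p 1 ^ 2 / 1600) ≠ 0) :
    Z' (eulerF4 p) = Z p := by
  have hC := (differentiable_cubicF4 (p, Z p)).hasFDerivAt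
  refine hC.implicit_apply_eq hZ hroot ?_ ?_
  · have hline :=
      hC.comp_hasDerivAt (Z p) ((hasDerivAt_const (Z p) p).prodMk (hasDerivAt_id' _))
    rwa [← hline.unique (hasDerivAt_cubicF4 p (Z p))] at hsimple
  · rw [hC.apply_eq_of_comp_eq_pow_mul (hasDerivAt_scaleF4_prod p (Z p))
      (by rw [scaleF4_one, one_mul]) (fun t => cubicF4_scaleF4 t (Z p) p)]
    simp [hroot.self_of_nhds]

theorem HasFDerivAt.potF4_apply_eulerF4 (hZ : HasFDerivAt Z Z' p)
    (hZe : Z' (eulerF4 p) = Z p) :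
    ∃ F' : (Fin 4 → ℝ) →L[ℝ] ℝ,
      HasFDerivAt (potF4 Z) F' p ∧ F' (eulerF4 p) = 7 * potF4 Z p := by
  have hG := (differentiable_potF4 (p, Z p)).hasFDerivAt
  have hGe : fderiv ℝ _ (p, Z p) (eulerF4 p, Z p) = 7 * potF4 Z p :=
    hG.apply_eq_of_comp_eq_pow_mul (hasDerivAt_scaleF4_prod p (Z p))
      (by rw [scaleF4_one, one_mul]) (fun t => potF4_scaleF4 t (Z p) p)
  exact ⟨_, hG.comp_graph hZ, by simpa [hZe] using hGe⟩

end Point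

/-- the quasihomogeneity (Euler) identity of the `F₄(a₂)` algebraic Frobenius
manifold: `(1/3)s₁ ∂₁F + (1/3)s₂ ∂₂F + s₃ ∂₃F + s₄ ∂₄F = (7/3) F` on `U`; in particular
`Z` itself satisfies `(1/3)s₁ ∂₁Z + (1/3)s₂ ∂₂Z + s₃ ∂₃Z = (1/3) Z`. -/
theorem potF4_quasihomogeneous (U : Set (Fin 4 → ℝ)) (hU : IsOpen U)
    (Z : (Fin 4 → ℝ) → ℝ) (hZsmooth : ContDiffOn ℝ 1 Z U)
    (hZ4 : ∀ p ∈ U, pd 3 Z p = 0)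
    (hZcubic : ∀ p ∈ U, cubicF4 p (Z p) = 0)
    (hZnd : ∀ p ∈ U,
      3 * (Z p) ^ 2 - ((p 0) ^ 2 / 48 + (p 0) * (p 1) / 80 + 3 * (p 1) ^ 2 / 1600) ≠ 0) :
    (∀ p ∈ U,
      (1 / 3) * (p 0) * pd 0 (potF4 Z) p + (1 / 3) * (p 1) * pd 1 (potF4 Z) p +
          (p 2) * pd 2 (potF4 Z) p + (p 3) * pd 3 (potF4 Z) p =
        (7 / 3) * potF4 Z p) ∧
    (∀ p ∈ U,
      (1 / 3) * (p 0) * pd 0 Z p + (1 / 3) * (p 1) * pd 1 Z p + (p 2) * pd 2 Z p =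
        (1 / 3) * Z p) := by
  have hEulerZ : ∀ p ∈ U,
      HasFDerivAt Z (fderiv ℝ Z p) p ∧ fderiv ℝ Z p (eulerF4 p) = Z p := by
    intro p hp
    have hZ := ((hZsmooth.contDiffAt (hU.mem_nhds hp)).differentiableAt one_ne_zero).hasFDerivAt
    exact ⟨hZ, hZ.apply_eulerF4_of_cubicF4 (eventually_of_mem (hU.mem_nhds hp) hZcubic)
      (hZnd p hp)⟩
  constructor
  · intro p hp
    obtain ⟨hZ, hZe⟩ := hEulerZ p hp
    obtain ⟨F', hF, hFe⟩ := hZ.potF4_apply_eulerF4 hZe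
    linear_combination (1 / 3 : ℝ) * (hF.euler_pd_eq.trans hFe)
  · intro p hp
    obtain ⟨hZ, hZe⟩ := hEulerZ p hp
    linear_combination (1 / 3 : ℝ) * (hZ.euler_pd_eq.trans hZe) - p 3 * hZ4 p hp
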